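/- arXiv:2508.21585 — 5 statements merged into one kernel-verified Lean document; each statement's English description precedes it below -/
import Mathlib

section
/- Let m_LO, m_SO, k_LO, k_SO be positive reals and k_c any real, and let λ* = (k_LO + k_SO)/(m_LO + m_SO). Then p(λ*) = −(k_SO·m_LO − k_LO·m_SO)²/(m_LO + m_SO)², where p(λ) = (k_LO + k_c − m_LO·λ)·(k_SO + k_c − m_SO·λ) − k_c². In particular, the value of the characteristic polynomial at λ* is independent of k_c and is nonpositive. -/
theorem stmt_3 (mLO mSO kLO kSO kc : ℝ) (hmLO : 0 < mLO) (hmSO : 0 < mSO)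
    (hkLO : 0 < kLO) (hkSO : 0 < kSO)
    (lamStar : ℝ) (hlam : lamStar = (kLO + kSO) / (mLO + mSO)) :
    (kLO + kc - mLO * lamStar) * (kSO + kc - mSO * lamStar) - kc ^ 2 =
      -((kSO * mLO - kLO * mSO) ^ 2 / (mLO + mSO) ^ 2) ∧
    (kLO + kc - mLO * lamStar) * (kSO + kc - mSO * lamStar) - kc ^ 2 ≤ 0 := by
  have hm : (mLO + mSO) ≠ 0 := by positivity
  have heq : (kLO + kc - mLO * lamStar) * (kSO + kc - mSO * lamStar) - kc ^ 2 =
      -((kSO * mLO - kLO * mSO) ^ 2 / (mLO + mSO) ^ 2) := by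
    subst hlam; field_simp; ring
  refine ⟨heq, heq ▸ ?_⟩
  have : 0 ≤ (kSO * mLO - kLO * mSO) ^ 2 / (mLO + mSO) ^ 2 := by positivity
  linarith
end

section
/- Let m_LO, m_SO, k_LO, k_SO be positive reals and k_c ≥ 0, and let λ₁ ≤ λ₂ denote the two roots of p(λ) = (k_LO + k_c − m_LO·λ)·(k_SO + k_c − m_SO·λ) − k_c². Then λ₁ ≤ (k_LO + k_SO)/(m_LO + m_SO) ≤ λ₂, and both inequalities are strict whenever k_SO·m_LO ≠ k_LO·m_SO. In particular, the first (smaller) squared natural frequency never exceeds (k_LO + k_SO)/(m_LO + m_SO), regardless of the coupling stiffness k_c. -/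
theorem stmt_4 (mLO mSO kLO kSO kc : ℝ) (hmLO : 0 < mLO) (hmSO : 0 < mSO)
    (hkLO : 0 < kLO) (hkSO : 0 < kSO) (hkc : 0 ≤ kc)
    (lam1 lam2 : ℝ) (hle : lam1 ≤ lam2)
    (hroots : ∀ lam : ℝ,
      (kLO + kc - mLO * lam) * (kSO + kc - mSO * lam) - kc ^ 2 = 0 ↔
        lam = lam1 ∨ lam = lam2) :
    lam1 ≤ (kLO + kSO) / (mLO + mSO) ∧ (kLO + kSO) / (mLO + mSO) ≤ lam2 ∧
      (kSO * mLO ≠ kLO * mSO →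
        lam1 < (kLO + kSO) / (mLO + mSO) ∧ (kLO + kSO) / (mLO + mSO) < lam2) := by
  have ha : (0:ℝ) < mLO * mSO := by positivity
  have ha' : mLO * mSO ≠ 0 := ne_of_gt ha
  have hs : (0:ℝ) < mLO + mSO := by linarith
  have hs' : mLO + mSO ≠ 0 := ne_of_gt hs
  have h1 := (hroots lam1).2 (Or.inl rfl)
  have h2 := (hroots lam2).2 (Or.inr rfl)
  set r : ℝ := (mLO*(kSO+kc)+mSO*(kLO+kc))/(mLO*mSO) - lam1 with hr
  have hpr : (kLO + kc - mLO * r) * (kSO + kc - mSO * r) - kc ^ 2 = 0 := by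
    have : (kLO + kc - mLO * r) * (kSO + kc - mSO * r) - kc ^ 2
        = (kLO + kc - mLO * lam1) * (kSO + kc - mSO * lam1) - kc ^ 2 := by
      rw [hr]; field_simp; ring
    rw [this]; exact h1
  have hr2 := (hroots r).1 hpr
  have key : ∀ x : ℝ, (kLO + kc - mLO * x) * (kSO + kc - mSO * x) - kc ^ 2
      = mLO * mSO * (x - lam1) * (x - lam2) := by
    have keyr : ∀ x : ℝ, (kLO + kc - mLO * x) * (kSO + kc - mSO * x) - kc ^ 2
        = mLO * mSO * (x - lam1) * (x - r) := by
      intro x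
      rw [hr]
      field_simp
      linear_combination h1
    rcases hr2 with h | h
    · -- r = lam1, so lam2 = lam1
      have hl : lam2 = lam1 := by
        have := keyr lam2
        rw [h] at this
        rw [h2] at this
        have this2 : mLO * mSO * ((lam2 - lam1) * (lam2 - lam1)) = 0 := by
          linear_combination -this
        rcases mul_eq_zero.mp this2 with h' | h'
        · exact absurd h' ha'
        · have := mul_self_eq_zero.mp h'
          linarith
      intro x
      rw [hl]
      have := keyr x
      rwa [h] at this
    · intro x; rw [← h]; exact keyr x
  set t : ℝ := (kLO + kSO) / (mLO + mSO) with ht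
  have hstar : mLO * mSO * (t - lam1) * (t - lam2)
      = -((kSO * mLO - kLO * mSO)^2) / (mLO + mSO)^2 := by
    rw [← key t, ht]
    field_simp
    ring
  have hnp : mLO * mSO * (t - lam1) * (t - lam2) ≤ 0 := by
    rw [hstar]
    apply div_nonpos_of_nonpos_of_nonneg
    · nlinarith [sq_nonneg (kSO * mLO - kLO * mSO)]
    · positivity
  have hA : lam1 ≤ t := by
    by_contra hc
    push_neg at hc
    have h2' : t < lam2 := lt_of_lt_of_le hc hle
    nlinarith [mul_pos ha (mul_pos_of_neg_of_neg (sub_neg.mpr hc) (sub_neg.mpr h2'))]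
  have hB : t ≤ lam2 := by
    by_contra hc
    push_neg at hc
    have h1' : lam1 < t := lt_of_le_of_lt hle hc
    nlinarith [mul_pos ha (mul_pos (sub_pos.mpr h1') (sub_pos.mpr hc))]
  refine ⟨hA, hB, fun hne => ?_⟩
  have hD : (kSO * mLO - kLO * mSO)^2 > 0 := by
    have : kSO * mLO - kLO * mSO ≠ 0 := sub_ne_zero.mpr hne
    positivity
  have hlt : mLO * mSO * (t - lam1) * (t - lam2) < 0 := by
    rw [hstar]
    apply div_neg_of_neg_of_pos
    · linarith
    · positivity
  constructor
  · rcases lt_or_eq_of_le hA with h | h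
    · exact h
    · exfalso; rw [← h] at hlt; simp at hlt
  · rcases lt_or_eq_of_le hB with h | h
    · exact h
    · exfalso; rw [h] at hlt; simp at hlt
end

section
/- Let m_LO, m_SO, k_LO, k_SO be positive reals. For k_c ≥ 0 define λ₁(k_c) = (S(k_c) − P(k_c))/(2·m_LO·m_SO), where S(k_c) = k_SO·m_LO + k_LO·m_SO + k_c·(m_LO + m_SO) and P(k_c) = √(k_c²·(m_LO + m_SO)² + 2·k_c·(m_LO − m_SO)·(k_SO·m_LO − k_LO·m_SO) + (k_SO·m_LO − k_LO·m_SO)²). Then λ₁ is monotone nondecreasing on [0, ∞): for all 0 ≤ k_c ≤ k_c', λ₁(k_c) ≤ λ₁(k_c'). -/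
theorem stmt_5 (mLO mSO kLO kSO : ℝ) (hmLO : 0 < mLO) (hmSO : 0 < mSO)
    (hkLO : 0 < kLO) (hkSO : 0 < kSO)
    (S P lam1 : ℝ → ℝ)
    (hS : ∀ kc, S kc = kSO * mLO + kLO * mSO + kc * (mLO + mSO))
    (hP : ∀ kc, P kc = Real.sqrt (kc ^ 2 * (mLO + mSO) ^ 2 +
        2 * kc * (mLO - mSO) * (kSO * mLO - kLO * mSO) +
        (kSO * mLO - kLO * mSO) ^ 2))
    (hlam1 : ∀ kc, lam1 kc = (S kc - P kc) / (2 * mLO * mSO)) :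
    ∀ kc kc' : ℝ, 0 ≤ kc → kc ≤ kc' → lam1 kc ≤ lam1 kc' := by
  intro kc kc' hkc hle
  set d : ℝ := kSO * mLO - kLO * mSO with hd
  set M : ℝ := mLO + mSO with hM
  have hMpos : 0 < M := by positivity
  have hQnn : ∀ x : ℝ, 0 ≤ x ^ 2 * M ^ 2 + 2 * x * (mLO - mSO) * d + d ^ 2 := by
    intro x
    rw [hM]
    nlinarith [sq_nonneg (x * (mLO - mSO) + d), sq_nonneg x, mul_pos hmLO hmSO]
  have hPnn : 0 ≤ P kc := by rw [hP]; exact Real.sqrt_nonneg _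
  have hP2 : (P kc) ^ 2 = kc ^ 2 * M ^ 2 + 2 * kc * (mLO - mSO) * d + d ^ 2 := by
    rw [hP]; exact Real.sq_sqrt (hQnn kc)
  -- key: A ≤ M * P kc
  have hA : kc * M ^ 2 + (mLO - mSO) * d ≤ M * P kc := by
    have h1 : (M * P kc) ^ 2 - (kc * M ^ 2 + (mLO - mSO) * d) ^ 2
        = 4 * mLO * mSO * d ^ 2 := by
      have : (M * P kc) ^ 2 = M ^ 2 * (P kc) ^ 2 := by ring
      rw [this, hP2, hM]; ring
    nlinarith [mul_nonneg hMpos.le hPnn, sq_nonneg d, mul_pos hmLO hmSO,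
      sq_nonneg (M * P kc + (kc * M ^ 2 + (mLO - mSO) * d)),
      sq_nonneg (M * P kc - (kc * M ^ 2 + (mLO - mSO) * d))]
  have ht : 0 ≤ kc' - kc := by linarith
  -- Lipschitz bound for P
  have hkey : P kc' ≤ P kc + (kc' - kc) * M := by
    have hrhs : 0 ≤ P kc + (kc' - kc) * M := by positivity
    have hle2 : kc' ^ 2 * M ^ 2 + 2 * kc' * (mLO - mSO) * d + d ^ 2
        ≤ (P kc + (kc' - kc) * M) ^ 2 := by
      have h2 : (kc' - kc) * (kc * M ^ 2 + (mLO - mSO) * d)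
          ≤ (kc' - kc) * (M * P kc) := mul_le_mul_of_nonneg_left hA ht
      nlinarith [hP2, sq_nonneg (kc' - kc)]
    calc P kc' = Real.sqrt (kc' ^ 2 * M ^ 2 + 2 * kc' * (mLO - mSO) * d + d ^ 2) := hP kc'
      _ ≤ Real.sqrt ((P kc + (kc' - kc) * M) ^ 2) := Real.sqrt_le_sqrt hle2
      _ = P kc + (kc' - kc) * M := Real.sqrt_sq hrhs
  rw [hlam1, hlam1]
  have hden : (0:ℝ) < 2 * mLO * mSO := by positivity
  apply (div_le_div_iff_of_pos_right hden).mpr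
  rw [hS, hS]
  linarith [hkey]
end

section
/- Let m_LO, m_SO, k_LO, k_SO be positive reals. With λ₁(k_c) = (S(k_c) − P(k_c))/(2·m_LO·m_SO), where S(k_c) = k_SO·m_LO + k_LO·m_SO + k_c·(m_LO + m_SO) and P(k_c) = √(k_c²·(m_LO + m_SO)² + 2·k_c·(m_LO − m_SO)·(k_SO·m_LO − k_LO·m_SO) + (k_SO·m_LO − k_LO·m_SO)²), one has λ₁(k_c) → (k_LO + k_SO)/(m_LO + m_SO) as k_c → ∞. -/
theorem stmt_6 (mLO mSO kLO kSO : ℝ) (hmLO : 0 < mLO) (hmSO : 0 < mSO)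
    (hkLO : 0 < kLO) (hkSO : 0 < kSO)
    (S P lam1 : ℝ → ℝ)
    (hS : ∀ kc, S kc = kSO * mLO + kLO * mSO + kc * (mLO + mSO))
    (hP : ∀ kc, P kc = Real.sqrt (kc ^ 2 * (mLO + mSO) ^ 2 +
        2 * kc * (mLO - mSO) * (kSO * mLO - kLO * mSO) +
        (kSO * mLO - kLO * mSO) ^ 2))
    (hlam1 : ∀ kc, lam1 kc = (S kc - P kc) / (2 * mLO * mSO)) :
    Filter.Tendsto lam1 Filter.atTop (nhds ((kLO + kSO) / (mLO + mSO))) := by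
  have hb : (0:ℝ) < mLO + mSO := by linarith
  -- the function in u = 1/kc
  set F : ℝ → ℝ := fun u => 2 * (kLO * kSO * u + (kLO + kSO)) /
      ((kSO * mLO + kLO * mSO) * u + (mLO + mSO) +
        Real.sqrt ((mLO + mSO) ^ 2 +
          2 * (mLO - mSO) * (kSO * mLO - kLO * mSO) * u +
          (kSO * mLO - kLO * mSO) ^ 2 * u ^ 2)) with hF
  have harg : ∀ u : ℝ, 0 ≤ (mLO + mSO) ^ 2 +
      2 * (mLO - mSO) * (kSO * mLO - kLO * mSO) * u +
      (kSO * mLO - kLO * mSO) ^ 2 * u ^ 2 := by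
    intro u
    nlinarith [sq_nonneg ((mLO + mSO) ^ 2 + (mLO - mSO) * (kSO * mLO - kLO * mSO) * u),
      mul_nonneg (mul_nonneg (mul_pos hmLO hmSO).le (sq_nonneg (kSO * mLO - kLO * mSO))) (sq_nonneg u),
      mul_pos hb hb]
  -- key identity : lam1 kc = F (kc⁻¹) for kc > 0
  have key : ∀ kc : ℝ, 0 < kc → lam1 kc = F kc⁻¹ := by
    intro kc hkc
    have hargkc : (0:ℝ) ≤ kc ^ 2 * (mLO + mSO) ^ 2 +
        2 * kc * (mLO - mSO) * (kSO * mLO - kLO * mSO) +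
        (kSO * mLO - kLO * mSO) ^ 2 := by
      nlinarith [sq_nonneg (kc * (mLO + mSO) ^ 2 + (mLO - mSO) * (kSO * mLO - kLO * mSO)),
        mul_nonneg (mul_pos hmLO hmSO).le (sq_nonneg (kSO * mLO - kLO * mSO)),
        mul_pos hb hb]
    -- P kc = kc * sqrt(arg (kc⁻¹))
    have hsM : P kc = kc * Real.sqrt ((mLO + mSO) ^ 2 +
        2 * (mLO - mSO) * (kSO * mLO - kLO * mSO) * kc⁻¹ +
        (kSO * mLO - kLO * mSO) ^ 2 * (kc⁻¹) ^ 2) := by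
      rw [hP]
      rw [show kc ^ 2 * (mLO + mSO) ^ 2 +
          2 * kc * (mLO - mSO) * (kSO * mLO - kLO * mSO) +
          (kSO * mLO - kLO * mSO) ^ 2 =
          kc ^ 2 * ((mLO + mSO) ^ 2 +
            2 * (mLO - mSO) * (kSO * mLO - kLO * mSO) * kc⁻¹ +
            (kSO * mLO - kLO * mSO) ^ 2 * (kc⁻¹) ^ 2) by
        field_simp]
      rw [Real.sqrt_mul (sq_nonneg kc), Real.sqrt_sq hkc.le]
    set s := Real.sqrt ((mLO + mSO) ^ 2 +
        2 * (mLO - mSO) * (kSO * mLO - kLO * mSO) * kc⁻¹ +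
        (kSO * mLO - kLO * mSO) ^ 2 * (kc⁻¹) ^ 2) with hsdef
    have hs0 : 0 ≤ s := Real.sqrt_nonneg _
    have hs2 : s ^ 2 = (mLO + mSO) ^ 2 +
        2 * (mLO - mSO) * (kSO * mLO - kLO * mSO) * kc⁻¹ +
        (kSO * mLO - kLO * mSO) ^ 2 * (kc⁻¹) ^ 2 := Real.sq_sqrt (harg _)
    have hden : 0 < (kSO * mLO + kLO * mSO) * kc⁻¹ + (mLO + mSO) + s := by
      have : 0 < (kSO * mLO + kLO * mSO) * kc⁻¹ := by positivity
      linarith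
    rw [hlam1, hS, hsM, hF]
    rw [div_eq_div_iff (by positivity) (ne_of_gt hden)]
    have hkc' : kc ≠ 0 := hkc.ne'
    have hs2' : (kc * s) ^ 2 = kc ^ 2 * (mLO + mSO) ^ 2 +
        2 * kc * (mLO - mSO) * (kSO * mLO - kLO * mSO) +
        (kSO * mLO - kLO * mSO) ^ 2 := by
      rw [mul_pow, hs2]
      field_simp
    field_simp
    linear_combination -hs2'
  -- continuity of F at 0 and its value there
  have hsqrt0 : Real.sqrt ((mLO + mSO) ^ 2 +
      2 * (mLO - mSO) * (kSO * mLO - kLO * mSO) * 0 +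
      (kSO * mLO - kLO * mSO) ^ 2 * (0:ℝ) ^ 2) = mLO + mSO := by
    simp [Real.sqrt_sq hb.le]
  have hF0 : F 0 = (kLO + kSO) / (mLO + mSO) := by
    rw [hF]
    norm_num [Real.sqrt_sq hb.le]
    rw [show mLO + mSO + (mLO + mSO) = 2 * (mLO + mSO) by ring]
    field_simp [hb.ne']
  have hcont : ContinuousAt F 0 := by
    apply ContinuousAt.div
    · fun_prop
    · fun_prop
    · norm_num [Real.sqrt_sq hb.le]
      positivity
  have h1 : Filter.Tendsto (fun kc : ℝ => F kc⁻¹) Filter.atTop (nhds (F 0)) :=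
    hcont.tendsto.comp tendsto_inv_atTop_zero
  rw [← hF0]
  apply h1.congr'
  filter_upwards [Filter.eventually_gt_atTop 0] with kc hkc
  exact (key kc hkc).symm
end

section
/- Let m_LO, m_SO, k_LO, k_SO, k_I > 0, α < 0, and β ∈ ℝ. Define k_c(T) = k_I/(1 + exp(α·(T − β))) and λ₁(k) = (S(k) − P(k))/(2·m_LO·m_SO), where S(k) = k_SO·m_LO + k_LO·m_SO + k·(m_LO + m_SO) and P(k) = √(k²·(m_LO + m_SO)² + 2·k·(m_LO − m_SO)·(k_SO·m_LO − k_LO·m_SO) + (k_SO·m_LO − k_LO·m_SO)²). Then the composite map T ↦ λ₁(k_c(T)) is monotone nondecreasing on ℝ: for all T ≤ T', λ₁(k_c(T)) ≤ λ₁(k_c(T')). -/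
theorem stmt_16 (mLO mSO kLO kSO kI : ℝ) (hmLO : 0 < mLO) (hmSO : 0 < mSO)
    (hkLO : 0 < kLO) (hkSO : 0 < kSO) (hkI : 0 < kI) (α β : ℝ) (hα : α < 0)
    (kc : ℝ → ℝ) (hkc : ∀ T, kc T = kI / (1 + Real.exp (α * (T - β))))
    (S P lam1 : ℝ → ℝ)
    (hS : ∀ k, S k = kSO * mLO + kLO * mSO + k * (mLO + mSO))
    (hP : ∀ k, P k = Real.sqrt (k ^ 2 * (mLO + mSO) ^ 2 +
        2 * k * (mLO - mSO) * (kSO * mLO - kLO * mSO) +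
        (kSO * mLO - kLO * mSO) ^ 2))
    (hlam1 : ∀ k, lam1 k = (S k - P k) / (2 * mLO * mSO)) :
    ∀ T T' : ℝ, T ≤ T' → lam1 (kc T) ≤ lam1 (kc T') := by
  set d : ℝ := kSO * mLO - kLO * mSO with hdd
  set q : ℝ → ℝ := fun k => k ^ 2 * (mLO + mSO) ^ 2 + 2 * k * (mLO - mSO) * d + d ^ 2
    with hq
  have hqk : ∀ k, q k = k ^ 2 * (mLO + mSO) ^ 2 + 2 * k * (mLO - mSO) * d + d ^ 2 := by
    intro k; simp [hq]
  have hM : (0:ℝ) < mLO + mSO := by linarith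
  have hqnn : ∀ k, 0 ≤ q k := by
    intro k
    nlinarith [hqk k, sq_nonneg ((mLO + mSO) ^ 2 * k + (mLO - mSO) * d),
      mul_nonneg (by positivity : (0:ℝ) ≤ 4 * mLO * mSO) (sq_nonneg d),
      pow_pos hM 2]
  have hPq : ∀ k, P k = Real.sqrt (q k) := fun k => hP k
  have key : ∀ k, (mLO + mSO) ^ 2 * k + (mLO - mSO) * d ≤ (mLO + mSO) * P k := by
    intro k
    have h1 : (mLO + mSO) * P k = Real.sqrt ((mLO + mSO) ^ 2 * q k) := by
      rw [hPq k, Real.sqrt_mul (sq_nonneg _), Real.sqrt_sq hM.le]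
    have h2 : ((mLO + mSO) ^ 2 * k + (mLO - mSO) * d) ^ 2 ≤ (mLO + mSO) ^ 2 * q k := by
      nlinarith [hqk k, mul_nonneg (by positivity : (0:ℝ) ≤ 4 * mLO * mSO) (sq_nonneg d),
        mul_pos hmLO hmSO]
    calc (mLO + mSO) ^ 2 * k + (mLO - mSO) * d
        ≤ |(mLO + mSO) ^ 2 * k + (mLO - mSO) * d| := le_abs_self _
      _ = Real.sqrt (((mLO + mSO) ^ 2 * k + (mLO - mSO) * d) ^ 2) :=
          (Real.sqrt_sq_eq_abs _).symm
      _ ≤ Real.sqrt ((mLO + mSO) ^ 2 * q k) := Real.sqrt_le_sqrt h2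
      _ = (mLO + mSO) * P k := h1.symm
  have mono : ∀ k k', k ≤ k' → lam1 k ≤ lam1 k' := by
    intro k k' hkk'
    have hPnn : 0 ≤ P k := by rw [hPq]; exact Real.sqrt_nonneg _
    have hPk2 : P k ^ 2 = q k := by rw [hPq]; exact Real.sq_sqrt (hqnn k)
    have hRHSnn : 0 ≤ (k' - k) * (mLO + mSO) + P k :=
      add_nonneg (mul_nonneg (by linarith) hM.le) hPnn
    have hsq : q k' ≤ ((k' - k) * (mLO + mSO) + P k) ^ 2 := by
      nlinarith [hqk k, hqk k', hPk2,
        mul_le_mul_of_nonneg_left (key k) (by linarith : (0:ℝ) ≤ 2 * (k' - k))]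
    have hPP : P k' ≤ (k' - k) * (mLO + mSO) + P k := by
      calc P k' = Real.sqrt (q k') := hPq k'
        _ ≤ Real.sqrt (((k' - k) * (mLO + mSO) + P k) ^ 2) := Real.sqrt_le_sqrt hsq
        _ = |(k' - k) * (mLO + mSO) + P k| := Real.sqrt_sq_eq_abs _
        _ = (k' - k) * (mLO + mSO) + P k := abs_of_nonneg hRHSnn
    rw [hlam1, hlam1]
    have hden : (0:ℝ) < 2 * mLO * mSO := by positivity
    rw [div_le_div_iff₀ hden hden]
    nlinarith [hS k, hS k', hPP, hden]
  intro T T' hT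
  apply mono
  rw [hkc, hkc]
  have he : Real.exp (α * (T' - β)) ≤ Real.exp (α * (T - β)) :=
    Real.exp_le_exp.2 (by nlinarith)
  have h1 : (0:ℝ) < 1 + Real.exp (α * (T' - β)) := by positivity
  gcongr
end
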